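/- Let X be a subshift of Q^M with ρ-bounded propagation. Then X is ρ-strongly irreducible and ρ-step. -/

import Mathlib

open Filter Set

namespace GoE

variable {G M Q : Type*}

/-- A left homogeneous space `⟨M, G, ▷⟩` together with a coordinate system
`⟨m₀, (g_{m₀,m})_{m∈M}⟩`: a cell space with finite stabiliser `G₀` of `m₀`. -/
structure CellSpace (G M : Type*) [Group G] where
  act : G → M → M
  one_act : ∀ m : M, act 1 m = m
  mul_act : ∀ (g h : G) (m : M), act (g * h) m = act g (act h m)
  transitive : ∀ m m' : M, ∃ g : G, act g m = m'
  m0 : M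
  coord : M → G
  coord_act : ∀ m : M, act (coord m) m0 = m
  stab_finite : {g : G | act g m0 = m0}.Finite

variable [Group G]

namespace CellSpace

/-- Membership in the stabiliser `G₀` of `m₀`. -/
def stab (R : CellSpace G M) (g : G) : Prop := R.act g R.m0 = R.m0

/-- The induced right semi-action `m ↝ gG₀ = g_{m₀,m} g ▷ m₀`, on representatives. -/
def sAct (R : CellSpace G M) (m : M) (g : G) : M := R.act (R.coord m * g) R.m0

/-- `m ↝ ι n` where `ι : M → G/G₀`, `n ↦ G_{m₀,n}` is the canonical identification. -/
def nAct (R : CellSpace G M) (m n : M) : M := R.act (R.coord m * R.coord n) R.m0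

/-- `S ⊆ G` represents a finite symmetric right generating set of cosets
(`G₀ · S ⊆ S`, `S⁻¹ ⊆ S`, and `S` generates). -/
structure IsRightGenSet (R : CellSpace G M) (S : Set G) : Prop where
  finite : S.Finite
  saturated : ∀ s ∈ S, ∀ g₀ : G, R.stab g₀ → s * g₀ ∈ S
  stab_mul : ∀ g₀ : G, R.stab g₀ → ∀ s ∈ S, g₀ * s ∈ S
  symm : ∀ s ∈ S, s⁻¹ ∈ S
  generates : ∀ m : M, ∃ (k : ℕ) (f : ℕ → M), f 0 = R.m0 ∧ f k = m ∧
    ∀ i < k, ∃ s ∈ S, f (i + 1) = R.sAct (f i) s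

/-- There is an `S`-path of length `n` from `m` to `m'` in the `S`-Cayley graph. -/
def Chain (R : CellSpace G M) (S : Set G) (m m' : M) (n : ℕ) : Prop :=
  ∃ f : ℕ → M, f 0 = m ∧ f n = m' ∧ ∀ i < n, ∃ s ∈ S, f (i + 1) = R.sAct (f i) s

/-- The `S`-metric `d`. -/
noncomputable def dist (R : CellSpace G M) (S : Set G) (m m' : M) : ℕ :=
  sInf {n : ℕ | R.Chain S m m' n}

/-- The ball `B(m, ρ)` of radius `ρ` centred at `m`. -/
noncomputable def ball (R : CellSpace G M) (S : Set G) (m : M) (ρ : ℕ) : Set M :=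
  {m' : M | R.dist S m m' ≤ ρ}

/-- The `θ`-interior `A^{-θ}` of `A`. -/
noncomputable def inter (R : CellSpace G M) (S : Set G) (A : Set M) (θ : ℕ) : Set M :=
  {m ∈ A | R.ball S m θ ⊆ A}

/-- The `θ`-closure `A^{+θ}` of `A`. -/
noncomputable def clos (R : CellSpace G M) (S : Set G) (A : Set M) (θ : ℕ) : Set M :=
  {m : M | (R.ball S m θ ∩ A).Nonempty}

/-- The external `θ`-boundary `∂θ⁺A = A^{+θ} ∖ A`. -/
noncomputable def extB (R : CellSpace G M) (S : Set G) (A : Set M) (θ : ℕ) : Set M :=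
  R.clos S A θ \ A

/-- The internal `θ`-boundary `∂θ⁻A = A ∖ A^{-θ}`. -/
noncomputable def intB (R : CellSpace G M) (S : Set G) (A : Set M) (θ : ℕ) : Set M :=
  A \ R.inter S A θ

/-- The `θ`-boundary `∂θA = A^{+θ} ∖ A^{-θ}`. -/
noncomputable def bdry (R : CellSpace G M) (S : Set G) (A : Set M) (θ : ℕ) : Set M :=
  R.clos S A θ \ R.inter S A θ

end CellSpace

/-- The set `X_A` of restrictions to `A` of the elements of `X`. -/
def restr (A : Set M) (X : Set (M → Q)) : Set (A → Q) :=
  (fun x : M → Q => A.restrict x) '' X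

/-- The pattern `p` (with domain `A`) semi-occurs in the configuration `c`:
there is `h ∈ H` with `h ⊛ p = c↾_{h ▷ dom p}`. -/
def SemiOccurs (R : CellSpace G M) (H : Subgroup G) {A : Set M} (p : A → Q)
    (c : M → Q) : Prop :=
  ∃ h ∈ H, ∀ a : A, c (R.act h ↑a) = p a

/-- The pattern `p` (with domain `A`) occurs at `t` in the configuration `c`:
`t ⊛' p = c↾_{t ↝ A}`. -/
def OccursAt (R : CellSpace G M) {A : Set M} (p : A → Q) (t : M) (c : M → Q) : Prop :=
  ∀ a : A, c (R.nAct t ↑a) = p a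

/-- The pattern `p` is allowed in `X`: it semi-occurs in some point of `X`. -/
def Allowed (R : CellSpace G M) (H : Subgroup G) (X : Set (M → Q)) {A : Set M}
    (p : A → Q) : Prop :=
  ∃ x ∈ X, SemiOccurs R H p x

/-- The set `⟨𝔉⟩` generated by a set `𝔉` of forbidden patterns. -/
def Generated (R : CellSpace G M) (H : Subgroup G) (𝔉 : Set (Σ A : Set M, A → Q)) :
    Set (M → Q) :=
  {c : M → Q | ∀ f ∈ 𝔉, ¬ SemiOccurs R H f.2 c}

/-- `X` is a subshift of `Q^M`: it is generated by a set of blocks. -/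
def IsSubshift (R : CellSpace G M) (H : Subgroup G) (X : Set (M → Q)) : Prop :=
  ∃ 𝔉 : Set (Σ A : Set M, A → Q), (∀ f ∈ 𝔉, f.1.Finite) ∧ X = Generated R H 𝔉

/-- `X` is a subshift of finite type: it is generated by a finite set of blocks. -/
def IsSubshiftFT (R : CellSpace G M) (H : Subgroup G) (X : Set (M → Q)) : Prop :=
  ∃ 𝔉 : Set (Σ A : Set M, A → Q), 𝔉.Finite ∧ (∀ f ∈ 𝔉, f.1.Finite) ∧
    X = Generated R H 𝔉

/-- `X` is a `κ`-step subshift: it is generated by a set of `B(κ)`-blocks. -/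
def IsStep (R : CellSpace G M) (S : Set G) (H : Subgroup G) (X : Set (M → Q))
    (κ : ℕ) : Prop :=
  ∃ 𝔉 : Set (Σ A : Set M, A → Q), (∀ f ∈ 𝔉, f.1 = R.ball S R.m0 κ) ∧
    X = Generated R H 𝔉

/-- `X` is `κ`-strongly irreducible. -/
def IsStronglyIrr (R : CellSpace G M) (S : Set G) (H : Subgroup G)
    (X : Set (M → Q)) (κ : ℕ) : Prop :=
  ∀ (A B : Set M), A.Finite → B.Finite → ∀ (p : A → Q) (p' : B → Q),
    Allowed R H X p → Allowed R H X p' →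
    (∀ a ∈ A, ∀ b ∈ B, κ + 1 ≤ R.dist S a b) →
    ∃ x ∈ X, A.restrict x = p ∧ B.restrict x = p'

/-- `X` has `ρ`-bounded propagation. -/
def HasBoundedProp (R : CellSpace G M) (S : Set G) (X : Set (M → Q)) (ρ : ℕ) : Prop :=
  ∀ F : Set M, F.Finite → ∀ p : F → Q,
    (∀ f ∈ F, ∃ x ∈ X, ∀ (m : M) (hm : m ∈ R.ball S f ρ ∩ F), p ⟨m, hm.2⟩ = x m) →
    ∃ x ∈ X, F.restrict x = p

/-- `Δ` is a `κ`-local map from `X` to `Y`. -/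
def IsLocalMap (R : CellSpace G M) (S : Set G) (H : Subgroup G)
    (X Y : Set (M → Q)) (Δ : (M → Q) → (M → Q)) (κ : ℕ) : Prop :=
  Set.MapsTo Δ X Y ∧
  ∃ N : Set M, N ⊆ R.ball S R.m0 κ ∧
    (∀ g₀ : G, R.stab g₀ → ∀ n ∈ N, R.act g₀ n ∈ N) ∧
    ∃ δ : (N → Q) → Q,
      (∀ h₀ ∈ H, R.stab h₀ →
        ∀ ℓ ∈ restr N X, ∀ ℓ' : N → Q,
          (∀ (n : M) (hn : n ∈ N) (hn' : R.act h₀⁻¹ n ∈ N),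
            ℓ' ⟨n, hn⟩ = ℓ ⟨R.act h₀⁻¹ n, hn'⟩) →
          δ ℓ' = δ ℓ) ∧
      ∀ x ∈ X, ∀ m : M, Δ x m = δ (fun n : N => x (R.nAct m ↑n))

/-- `Δ` is pre-injective on `X`. -/
def PreInjective (X : Set (M → Q)) (Δ : (M → Q) → (M → Q)) : Prop :=
  ∀ x ∈ X, ∀ x' ∈ X, Δ x = Δ x' → {m : M | x m ≠ x' m}.Finite → x = x'

/-- The cell space `R` is right amenable: there is a finitely additive probability
measure on the power set of `M` that is semi-invariant under the right semi-action. -/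
def RightAmenable (R : CellSpace G M) : Prop :=
  ∃ μ : Set M → ℝ, (∀ A : Set M, 0 ≤ μ A) ∧ μ Set.univ = 1 ∧
    (∀ A B : Set M, Disjoint A B → μ (A ∪ B) = μ A + μ B) ∧
    ∀ (g : G) (A : Set M), Set.InjOn (fun m => R.sAct m g) A →
      μ ((fun m => R.sAct m g) '' A) = μ A

/-- `F` is a right Følner net in `R` (indexed by the directed set `I`). -/
def IsFolnerNet (R : CellSpace G M) (S : Set G) {I : Type*} [Preorder I]
    (F : I → Set M) : Prop :=
  (∀ i, (F i).Nonempty) ∧ (∀ i, (F i).Finite) ∧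
  ∀ ρ : ℕ, Tendsto (fun i => ((R.bdry S (F i) ρ).ncard : ℝ) / ((F i).ncard : ℝ))
    atTop (nhds 0)

/-- The entropy of `X ⊆ Q^M` with respect to the net `F`:
`limsup_i log|X_{F_i}| / |F_i|`. -/
noncomputable def entropy (R : CellSpace G M) (S : Set G) {I : Type*} [Preorder I]
    (F : I → Set M) (X : Set (M → Q)) : ℝ :=
  limsup (fun i => Real.log ((restr (F i) X).ncard : ℝ) / ((F i).ncard : ℝ)) atTop

/-- `T` is a `⟨θ, κ, θ'⟩`-tiling of `R`. -/
def IsTiling (R : CellSpace G M) (S : Set G) (θ κ θ' : ℕ) (T : Set M) : Prop :=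
  (∀ t ∈ T, ∀ t' ∈ T, t ≠ t' →
    ∀ a ∈ R.ball S t θ, ∀ b ∈ R.ball S t' θ, κ + 1 ≤ R.dist S a b) ∧
  ∀ m : M, ∃ t ∈ T, m ∈ R.ball S t θ'

/-- The action `h ⊛ c` of `h ∈ G` on configurations: `(h ⊛ c)(m) = c(h⁻¹ ▷ m)`. -/
def shiftAct (R : CellSpace G M) (h : G) (c : M → Q) : M → Q :=
  fun m => c (R.act h⁻¹ m)


/-! Both properties come from bounded propagation applied to configurations that agree with a
point of `X` on every `ρ`-ball. For strong irreducibility, glue a point extending `p` on `A` to one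
extending `p'` off `A`: a `ρ`-ball about a cell of `A ∪ B` meets only one of `A` and `B`. For the
`ρ`-step property, forbid the `B(ρ)`-patterns not allowed in `X`: a configuration avoiding them
agrees with a point of `X` on every `ρ`-ball, hence on every finite set, hence lies in the closed
set `X`. -/

namespace CellSpace

variable (R : CellSpace G M)

@[simp]
lemma act_inv_act (g : G) (m : M) : R.act g⁻¹ (R.act g m) = m := by
  rw [← R.mul_act, inv_mul_cancel, R.one_act]

@[simp]
lemma act_act_inv (g : G) (m : M) : R.act g (R.act g⁻¹ m) = m := by
  rw [← R.mul_act, mul_inv_cancel, R.one_act]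

lemma act_coord_inv (m : M) : R.act (R.coord m)⁻¹ m = R.m0 := by
  simpa only [R.coord_act] using R.act_inv_act (R.coord m) R.m0

lemma dist_self (S : Set G) (m : M) : R.dist S m m = 0 :=
  Nat.eq_zero_of_le_zero <| Nat.sInf_le ⟨fun _ => m, rfl, rfl, fun i hi => absurd hi i.not_lt_zero⟩

variable {R} {S : Set G}

/-- `g_{m₀,m}⁻¹ g` fixes `m₀`, so `G₀ · S ⊆ S` absorbs it into the step. -/
lemma IsRightGenSet.exists_sAct_eq (hS : R.IsRightGenSet S) {g : G} {m : M}
    (hg : R.act g R.m0 = m) {s : G} (hs : s ∈ S) :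
    ∃ s' ∈ S, R.sAct m s' = R.act (g * s) R.m0 := by
  have hstab : R.stab ((R.coord m)⁻¹ * g) := by
    rw [stab, R.mul_act, hg, act_coord_inv]
  refine ⟨(R.coord m)⁻¹ * g * s, hS.stab_mul _ hstab s hs, ?_⟩
  simp only [sAct, mul_assoc, mul_inv_cancel_left]

lemma IsRightGenSet.exists_sAct_act_eq (hS : R.IsRightGenSet S) (g : G) (m : M) {s : G}
    (hs : s ∈ S) : ∃ s' ∈ S, R.sAct (R.act g m) s' = R.act g (R.sAct m s) := by
  obtain ⟨s', hs', h⟩ := hS.exists_sAct_eq (g := g * R.coord m) (by rw [R.mul_act, R.coord_act]) hs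
  exact ⟨s', hs', by rw [h, mul_assoc, R.mul_act, sAct]⟩

lemma IsRightGenSet.exists_sAct_sAct_eq (hS : R.IsRightGenSet S) (m : M) {s : G} (hs : s ∈ S) :
    ∃ s' ∈ S, R.sAct (R.sAct m s) s' = m := by
  obtain ⟨s', hs', h⟩ := hS.exists_sAct_eq (g := R.coord m * s) rfl (hS.symm s hs)
  exact ⟨s', hs', h.trans (by rw [mul_inv_cancel_right, R.coord_act])⟩

lemma Chain.act (hS : R.IsRightGenSet S) (g : G) {m m' : M} {n : ℕ} (h : R.Chain S m m' n) :
    R.Chain S (R.act g m) (R.act g m') n := by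
  obtain ⟨f, rfl, rfl, hstep⟩ := h
  refine ⟨fun i => R.act g (f i), rfl, rfl, fun i hi => ?_⟩
  obtain ⟨s, hs, hf⟩ := hstep i hi
  obtain ⟨s', hs', h⟩ := hS.exists_sAct_act_eq g (f i) hs
  exact ⟨s', hs', by rw [h]; exact congrArg _ hf⟩

lemma Chain.symm (hS : R.IsRightGenSet S) {m m' : M} {n : ℕ} (h : R.Chain S m m' n) :
    R.Chain S m' m n := by
  obtain ⟨f, rfl, rfl, hstep⟩ := h
  refine ⟨fun i => f (n - i), by simp, by simp, fun i hi => ?_⟩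
  obtain ⟨s, hs, hf⟩ := hstep (n - (i + 1)) (by omega)
  obtain ⟨s', hs', h⟩ := hS.exists_sAct_sAct_eq (f (n - (i + 1))) hs
  rw [show n - (i + 1) + 1 = n - i by omega] at hf
  exact ⟨s', hs', by simp only [hf, h]⟩

lemma dist_act (hS : R.IsRightGenSet S) (g : G) (m m' : M) :
    R.dist S (R.act g m) (R.act g m') = R.dist S m m' := by
  unfold dist
  congr 1
  ext n
  refine ⟨fun h => ?_, Chain.act hS g⟩
  simpa using h.act hS g⁻¹

lemma dist_comm (hS : R.IsRightGenSet S) (m m' : M) : R.dist S m m' = R.dist S m' m := by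
  unfold dist
  congr 1
  ext n
  exact ⟨Chain.symm hS, Chain.symm hS⟩

lemma act_mem_ball_iff (hS : R.IsRightGenSet S) (g : G) {m m' : M} {ρ : ℕ} :
    R.act g m' ∈ R.ball S (R.act g m) ρ ↔ m' ∈ R.ball S m ρ := by
  simp only [ball, mem_ofPred_eq, dist_act hS]

end CellSpace

open CellSpace

variable {R : CellSpace G M} {S : Set G} {H : Subgroup G} {X : Set (M → Q)} {ρ : ℕ}

lemma IsSubshift.shiftAct_mem (hX : IsSubshift R H X) {h : G} (hh : h ∈ H) {x : M → Q}
    (hx : x ∈ X) : shiftAct R h x ∈ X := by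
  obtain ⟨𝔉, -, rfl⟩ := hX
  rintro f hf ⟨h', hh', hocc⟩
  refine hx f hf ⟨h⁻¹ * h', mul_mem (inv_mem hh) hh', fun a => ?_⟩
  rw [R.mul_act]
  exact hocc a

lemma IsSubshift.exists_mem_extend_of_allowed (hX : IsSubshift R H X) {A : Set M} {p : A → Q}
    (hp : Allowed R H X p) : ∃ y ∈ X, ∀ a : A, y a = p a := by
  obtain ⟨x, hx, h, hh, hocc⟩ := hp
  refine ⟨shiftAct R h⁻¹ x, hX.shiftAct_mem (inv_mem hh) hx, fun a => ?_⟩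
  simpa [shiftAct] using hocc a

lemma IsSubshift.mem_of_forall_finite_eqOn (hX : IsSubshift R H X) {c : M → Q}
    (hc : ∀ F : Set M, F.Finite → ∃ x ∈ X, EqOn x c F) : c ∈ X := by
  obtain ⟨𝔉, h𝔉, rfl⟩ := hX
  rintro f hf ⟨h, hh, hocc⟩
  obtain ⟨x, hx, hxc⟩ := hc (R.act h '' f.1) ((h𝔉 f hf).image _)
  exact hx f hf ⟨h, hh, fun a => (hxc (mem_image_of_mem _ a.2)).trans (hocc a)⟩

lemma IsSubshift.exists_mem_eqOn_ball (hS : R.IsRightGenSet S) (hX : IsSubshift R H X) {g : G}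
    (hg : g ∈ H) {c : M → Q} (hq : Allowed R H X fun n : R.ball S R.m0 ρ => c (R.act g n)) :
    ∃ x ∈ X, EqOn c x (R.ball S (R.act g R.m0) ρ) := by
  obtain ⟨y, hy, hyq⟩ := hX.exists_mem_extend_of_allowed hq
  refine ⟨shiftAct R g y, hX.shiftAct_mem hg hy, fun m hm => ?_⟩
  have hm₀ : R.act g⁻¹ m ∈ R.ball S R.m0 ρ := by
    simpa using (act_mem_ball_iff hS g⁻¹).2 hm
  simpa [shiftAct] using (hyq ⟨_, hm₀⟩).symm

lemma HasBoundedProp.exists_mem_eqOn (hbp : HasBoundedProp R S X ρ) {F : Set M} (hF : F.Finite)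
    (c : M → Q) (hc : ∀ f ∈ F, ∃ x ∈ X, EqOn c x (R.ball S f ρ ∩ F)) : ∃ x ∈ X, EqOn x c F := by
  obtain ⟨x, hx, hxc⟩ := hbp F hF (F.domRestrict c) fun f hf =>
    (hc f hf).imp fun _ hx => ⟨hx.1, fun _ hm => hx.2 hm⟩
  exact ⟨x, hx, domRestrict_eq_domRestrict_iff.1 hxc⟩

lemma HasBoundedProp.mem_of_forall_eqOn_ball (hX : IsSubshift R H X)
    (hbp : HasBoundedProp R S X ρ) {c : M → Q} (hc : ∀ f, ∃ x ∈ X, EqOn c x (R.ball S f ρ)) :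
    c ∈ X :=
  hX.mem_of_forall_finite_eqOn fun _ hF => hbp.exists_mem_eqOn hF c fun f _ =>
    (hc f).imp fun _ hx => ⟨hx.1, hx.2.mono inter_subset_left⟩

theorem HasBoundedProp.isStronglyIrr (hS : R.IsRightGenSet S) (hX : IsSubshift R H X)
    (hbp : HasBoundedProp R S X ρ) : IsStronglyIrr R S H X ρ := by
  classical
  intro A B hA hB p p' hp hp' hAB
  obtain ⟨y, hy, hyp⟩ := hX.exists_mem_extend_of_allowed hp
  obtain ⟨y', hy', hyp'⟩ := hX.exists_mem_extend_of_allowed hp'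
  have hdisj : ∀ b ∈ B, b ∉ A := fun b hb ha => by simpa [R.dist_self] using hAB b ha b hb
  have hfar : ∀ a ∈ A, ∀ b ∈ B, b ∉ R.ball S a ρ ∧ a ∉ R.ball S b ρ := fun a ha b hb => by
    have := hAB a ha b hb
    simp only [ball, mem_ofPred_eq, dist_comm hS b a]
    omega
  obtain ⟨x, hx, hxc⟩ := hbp.exists_mem_eqOn (hA.union hB) (A.piecewise y y') <| by
    rintro f (hf | hf)
    · refine ⟨y, hy, fun m hm => piecewise_eq_of_mem _ _ _ ?_⟩
      exact hm.2.resolve_right fun hmB => (hfar f hf m hmB).1 hm.1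
    · exact ⟨y', hy', fun m hm => piecewise_eq_of_notMem _ _ _ fun hmA => (hfar m hmA f hf).2 hm.1⟩
  refine ⟨x, hx, funext fun a => ?_, funext fun b => ?_⟩
  · exact (hxc (Or.inl a.2)).trans <| by rw [piecewise_eq_of_mem _ _ _ a.2, hyp]
  · exact (hxc (Or.inr b.2)).trans <| by rw [piecewise_eq_of_notMem _ _ _ (hdisj b b.2), hyp']

theorem HasBoundedProp.isStep (hS : R.IsRightGenSet S) (hH : ∀ m : M, R.coord m ∈ H)
    (hX : IsSubshift R H X) (hbp : HasBoundedProp R S X ρ) : IsStep R S H X ρ := by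
  refine ⟨Sigma.mk (R.ball S R.m0 ρ) '' {q | ¬ Allowed R H X q}, by rintro _ ⟨q, -, rfl⟩; rfl,
    Subset.antisymm (fun x hx => ?_) (fun c hc => ?_)⟩
  · rintro _ ⟨q, hq, rfl⟩ hocc
    exact hq ⟨x, hx, hocc⟩
  · refine hbp.mem_of_forall_eqOn_ball hX fun f => ?_
    have hq : Allowed R H X fun n : R.ball S R.m0 ρ => c (R.act (R.coord f) n) := by
      by_contra hq
      exact hc _ ⟨_, hq, rfl⟩ ⟨R.coord f, hH f, fun _ => rfl⟩
    simpa only [R.coord_act] using hX.exists_mem_eqOn_ball hS (hH f) hq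

theorem stmt6_general
    (R : CellSpace G M) (S : Set G) (hS : R.IsRightGenSet S)
    (H : Subgroup G) (hH : ∀ m : M, R.coord m ∈ H)
    (X : Set (M → Q)) (hX : IsSubshift R H X) (ρ : ℕ)
    (hbp : HasBoundedProp R S X ρ) :
    IsStronglyIrr R S H X ρ ∧ IsStep R S H X ρ :=
  ⟨hbp.isStronglyIrr hS hX, hbp.isStep hS hH hX⟩

theorem stmt6
    [Finite Q] (R : CellSpace G M) (S : Set G) (hS : R.IsRightGenSet S)
    (H : Subgroup G) (hH : ∀ m : M, R.coord m ∈ H)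
    (X : Set (M → Q)) (hX : IsSubshift R H X) (ρ : ℕ)
    (hbp : HasBoundedProp R S X ρ) :
    IsStronglyIrr R S H X ρ ∧ IsStep R S H X ρ :=
  stmt6_general R S hS H hH X hX ρ hbp

end GoE
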